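/- Let t ∈ (0,1) and suppose f_t(x) > 0 for every x ∈ C outside the feasible set A. Then x* is a global minimizer of f over A if and only if x* is a global minimizer of f_t over C (assuming A is nonempty and f − K < 0 on C). -/
import Mathlib


theorem minimizer_iff_deformed_minimizer {α : Type*} (C : Set α)
    (f F : α → ℝ) (hF : ∀ x ∈ C, 0 ≤ F x)
    (A : Set α) (hA : A = {x ∈ C | F x = 0}) (hAne : A.Nonempty)
    (K : ℝ) (hK : ∀ x ∈ C, f x < K)
    (t M : ℝ) (ht : t ∈ Set.Ioo (0:ℝ) 1)
    (ft : α → ℝ) (hft : ∀ x, ft x = (1 - t) * (f x - K) + t * M * F x)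
    (hpos : ∀ x ∈ C \ A, 0 < ft x)
    (xstar : α) (hxC : xstar ∈ C) :
    (xstar ∈ A ∧ ∀ x ∈ A, f xstar ≤ f x) ↔ (∀ x ∈ C, ft xstar ≤ ft x) := by
  have ht1 : 0 < 1 - t := by linarith [ht.2]
  have hftA : ∀ x ∈ A, ft x = (1 - t) * (f x - K) := by
    intro x hx
    rw [hA] at hx
    rw [hft, hx.2]; ring
  have hftneg : ∀ x ∈ A, ft x < 0 := by
    intro x hx
    rw [hftA x hx]
    have hxc : x ∈ C := by rw [hA] at hx; exact hx.1
    have := hK x hxc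
    nlinarith
  constructor
  · rintro ⟨hxA, hmin⟩ x hxCx
    by_cases hxA' : x ∈ A
    · rw [hftA xstar hxA, hftA x hxA']
      have := hmin x hxA'
      nlinarith
    · have := hpos x ⟨hxCx, hxA'⟩
      have := hftneg xstar hxA
      linarith
  · intro hmin
    have hxsA : xstar ∈ A := by
      by_contra hns
      obtain ⟨a, ha⟩ := hAne
      have haC : a ∈ C := by rw [hA] at ha; exact ha.1
      have h1 := hpos xstar ⟨hxC, hns⟩
      have h2 := hftneg a ha
      have := hmin a haC
      linarith
    refine ⟨hxsA, fun x hx => ?_⟩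
    have hxC' : x ∈ C := by rw [hA] at hx; exact hx.1
    have := hmin x hxC'
    rw [hftA xstar hxsA, hftA x hx] at this
    nlinarith
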